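/- Let G₁ = (X₁, ω₁) and G₂ = (X₂, ω₂) be finite weighted digraphs with distinguished vertices x₀ ∈ X₁ and y₀ ∈ X₂, and form the wedge sum graph G₁ ∨ G₂ by identifying x₀ and y₀. Then every maximal simplex of the closure A of the set-difference 𝔇^⋆_δ(P(G₁ ∨ G₂)) \ 𝔇^⋆_δ(P(G₁) ∨ P(G₂)) contains the wedge point x₀. (Here 𝔇^⋆_δ denotes the Dowker source complex at parameter δ.) -/

import Mathlib

/-!
Take a shortest-path witness `v` for a simplex of the Dowker complex of `P(G₁ ∨ G₂)` that is not a
simplex of the Dowker complex of `P(G₁) ∨ P(G₂)`: some vertex `x` of it has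
`spd v x ≤ δ < (P(G₁) ∨ P(G₂))(v, x)`. A path from `v` to `x` avoiding the wedge point stays on one
side, so its weight is at least `(P(G₁) ∨ P(G₂))(v, x)`; hence every short path passes through the
wedge point and `spd v x₀ ≤ δ`. So the wedge point can be added to any simplex of the difference,
and a maximal simplex of its closure already contains it.
-/

open scoped ENNReal

noncomputable def pathWeight {X : Type*} (ω : X → X → ℝ≥0∞) : List X → ℝ≥0∞
  | [] => 0
  | [_] => 0
  | a :: b :: t => ω a b + pathWeight ω (b :: t)

noncomputable def spd {X : Type*} (ω : X → X → ℝ≥0∞) (x y : X) : ℝ≥0∞ :=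
  ⨅ p : {l : List X // l.head? = some x ∧ l.getLast? = some y}, pathWeight ω p.1

/-- The weight function of the wedge sum of two weighted digraphs, with vertex set
X₁ ⊕ (X₂ \ {y₀}), the wedge point being (the image of) x₀ ∼ y₀. -/
noncomputable def wedgeWeight {X₁ X₂ : Type*} [DecidableEq X₁] (x₀ : X₁) (y₀ : X₂)
    (μ₁ : X₁ → X₁ → ℝ≥0∞) (μ₂ : X₂ → X₂ → ℝ≥0∞) :
    (X₁ ⊕ {y : X₂ // y ≠ y₀}) → (X₁ ⊕ {y : X₂ // y ≠ y₀}) → ℝ≥0∞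
  | Sum.inl a, Sum.inl b => μ₁ a b
  | Sum.inl a, Sum.inr b => if a = x₀ then μ₂ y₀ b.1 else ⊤
  | Sum.inr a, Sum.inl b => if b = x₀ then μ₂ a.1 y₀ else ⊤
  | Sum.inr a, Sum.inr b => μ₂ a.1 b.1

section spd

variable {X : Type*} (ω : X → X → ℝ≥0∞)

lemma spd_le_pathWeight {x y : X} {l : List X} (hx : l.head? = some x)
    (hy : l.getLast? = some y) : spd ω x y ≤ pathWeight ω l :=
  iInf_le_of_le ⟨l, hx, hy⟩ le_rfl

lemma le_spd {x y : X} {c : ℝ≥0∞}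
    (h : ∀ l : List X, l.head? = some x → l.getLast? = some y → c ≤ pathWeight ω l) :
    c ≤ spd ω x y :=
  le_iInf fun p => h p.1 p.2.1 p.2.2

@[simp]
lemma spd_self (x : X) : spd ω x x = 0 :=
  nonpos_iff_eq_zero.mp (spd_le_pathWeight ω (l := [x]) rfl rfl)

lemma spd_le_add_spd (x y z : X) : spd ω x z ≤ ω x y + spd ω y z := by
  unfold spd
  rw [ENNReal.add_iInf]
  refine le_iInf fun ⟨l, hy, hz⟩ => ?_
  obtain ⟨t, rfl⟩ := List.head?_eq_some_iff.mp hy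
  exact spd_le_pathWeight ω (l := x :: y :: t) rfl (by simpa using hz)

lemma spd_le_pathWeight_of_mem {x z : X} {l : List X} (hx : l.head? = some x) (hz : z ∈ l) :
    spd ω x z ≤ pathWeight ω l := by
  induction l generalizing x with
  | nil => simp at hz
  | cons a t ih =>
    obtain rfl : a = x := Option.some.inj hx
    rcases List.mem_cons.mp hz with rfl | hzt
    · simp
    · obtain ⟨b, t', rfl⟩ := List.exists_cons_of_ne_nil (List.ne_nil_of_mem hzt)
      exact (spd_le_add_spd ω a b z).trans (add_le_add le_rfl (ih rfl hzt))

end spd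

section wedge

variable {X₁ X₂ : Type*} [DecidableEq X₁] (x₀ : X₁) (y₀ : X₂)
  (ω₁ : X₁ → X₁ → ℝ≥0∞) (ω₂ : X₂ → X₂ → ℝ≥0∞)

lemma wedgeWeight_spd_self (v : X₁ ⊕ {y : X₂ // y ≠ y₀}) :
    wedgeWeight x₀ y₀ (spd ω₁) (spd ω₂) v v = 0 := by
  cases v <;> simp [wedgeWeight]

/-- Away from the wedge point a crossing edge weighs `⊤`, so each case is trivial or a triangle
inequality inside one factor. -/
lemma wedgeWeight_spd_le_add (s s' x : X₁ ⊕ {y : X₂ // y ≠ y₀}) (hs' : s' ≠ Sum.inl x₀) :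
    wedgeWeight x₀ y₀ (spd ω₁) (spd ω₂) s x ≤
      wedgeWeight x₀ y₀ ω₁ ω₂ s s' + wedgeWeight x₀ y₀ (spd ω₁) (spd ω₂) s' x := by
  rcases s with a | a <;> rcases s' with c | c <;> rcases x with b | b <;>
    simp only [wedgeWeight] <;> (try split_ifs) <;> simp_all [spd_le_add_spd]

lemma wedgeWeight_spd_le_pathWeight {v x : X₁ ⊕ {y : X₂ // y ≠ y₀}}
    {l : List (X₁ ⊕ {y : X₂ // y ≠ y₀})}
    (hv : l.head? = some v) (hx : l.getLast? = some x) (hl : Sum.inl x₀ ∉ l) :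
    wedgeWeight x₀ y₀ (spd ω₁) (spd ω₂) v x ≤ pathWeight (wedgeWeight x₀ y₀ ω₁ ω₂) l := by
  induction l generalizing v with
  | nil => simp at hv
  | cons a t ih =>
    obtain rfl : a = v := Option.some.inj hv
    cases t with
    | nil =>
      obtain rfl : a = x := Option.some.inj hx
      simp [wedgeWeight_spd_self]
    | cons b t =>
      have hb : b ≠ Sum.inl x₀ := fun h => hl (h ▸ List.mem_cons_of_mem _ List.mem_cons_self)
      calc wedgeWeight x₀ y₀ (spd ω₁) (spd ω₂) a x
          ≤ wedgeWeight x₀ y₀ ω₁ ω₂ a b + wedgeWeight x₀ y₀ (spd ω₁) (spd ω₂) b x :=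
            wedgeWeight_spd_le_add x₀ y₀ ω₁ ω₂ a b x hb
        _ ≤ pathWeight (wedgeWeight x₀ y₀ ω₁ ω₂) (a :: b :: t) :=
            add_le_add le_rfl (ih rfl (by simpa using hx) (List.not_mem_of_not_mem_cons hl))

lemma min_wedgeWeight_spd_le_spd_wedgeWeight (v x : X₁ ⊕ {y : X₂ // y ≠ y₀}) :
    min (wedgeWeight x₀ y₀ (spd ω₁) (spd ω₂) v x) (spd (wedgeWeight x₀ y₀ ω₁ ω₂) v (Sum.inl x₀)) ≤
      spd (wedgeWeight x₀ y₀ ω₁ ω₂) v x :=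
  le_spd _ fun l hv hx => by
    by_cases hl : Sum.inl x₀ ∈ l
    · exact min_le_of_right_le (spd_le_pathWeight_of_mem _ hv hl)
    · exact min_le_of_left_le (wedgeWeight_spd_le_pathWeight x₀ y₀ ω₁ ω₂ hv hx hl)

end wedge

theorem wedge_difference_maximal_simplices_contain_wedge_point_general
    {X₁ X₂ : Type*} [DecidableEq X₁]
    (ω₁ : X₁ → X₁ → ℝ≥0∞) (ω₂ : X₂ → X₂ → ℝ≥0∞) (x₀ : X₁) (y₀ : X₂) (δ : ℝ≥0∞)
    (dowkerWedge dowkerOfCompletions A : Set (Finset (X₁ ⊕ {y : X₂ // y ≠ y₀})))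
    (hDW : dowkerWedge =
      {σ | σ.Nonempty ∧ ∃ v, ∀ x ∈ σ, spd (wedgeWeight x₀ y₀ ω₁ ω₂) v x ≤ δ})
    (hDC : dowkerOfCompletions =
      {σ | σ.Nonempty ∧ ∃ v, ∀ x ∈ σ, wedgeWeight x₀ y₀ (spd ω₁) (spd ω₂) v x ≤ δ})
    (hA : A = {τ | τ.Nonempty ∧
      ∃ σ, σ ∈ dowkerWedge ∧ σ ∉ dowkerOfCompletions ∧ τ ⊆ σ}) :
    ∀ σ ∈ A, (∀ τ ∈ A, σ ⊆ τ → τ = σ) → Sum.inl x₀ ∈ σ := by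
  classical
  subst hDW hDC
  rintro σ hσ hmax
  obtain ⟨-, σ', ⟨hσ', v, hv⟩, hσ'_not_mem, hσσ'⟩ := hA ▸ hσ
  obtain ⟨x, hx, hδx⟩ : ∃ x ∈ σ', δ < wedgeWeight x₀ y₀ (spd ω₁) (spd ω₂) v x := by
    by_contra! h
    exact hσ'_not_mem ⟨hσ', v, h⟩
  have hv₀ : spd (wedgeWeight x₀ y₀ ω₁ ω₂) v (Sum.inl x₀) ≤ δ := by
    have := (min_wedgeWeight_spd_le_spd_wedgeWeight x₀ y₀ ω₁ ω₂ v x).trans (hv x hx)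
    exact (min_le_iff.mp this).resolve_left hδx.not_ge
  have hσ_insert_mem : insert (Sum.inl x₀) σ ∈ A := by
    rw [hA]
    refine ⟨Finset.insert_nonempty _ _, insert (Sum.inl x₀) σ',
      ⟨Finset.insert_nonempty _ _, v, Finset.forall_mem_insert _ _ _ |>.mpr ⟨hv₀, hv⟩⟩,
      fun ⟨_, w, hw⟩ => hσ'_not_mem ⟨hσ', w, fun z hz => hw z (Finset.mem_insert_of_mem hz)⟩,
      Finset.insert_subset_insert _ hσσ'⟩
  rw [← hmax _ hσ_insert_mem (Finset.subset_insert _ _)]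
  exact Finset.mem_insert_self _ _

/-- Every maximal simplex of the closure A of the set difference
𝔇⋆_δ(P(G₁ ∨ G₂)) \ 𝔇⋆_δ(P(G₁) ∨ P(G₂)) contains the wedge point x₀. -/
theorem wedge_difference_maximal_simplices_contain_wedge_point
    {X₁ X₂ : Type*} [Fintype X₁] [Fintype X₂] [DecidableEq X₁] [DecidableEq X₂]
    (ω₁ : X₁ → X₁ → ℝ≥0∞) (ω₂ : X₂ → X₂ → ℝ≥0∞) (x₀ : X₁) (y₀ : X₂) (δ : ℝ≥0∞)
    (dowkerWedge dowkerOfCompletions A : Set (Finset (X₁ ⊕ {y : X₂ // y ≠ y₀})))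
    (hDW : dowkerWedge =
      {σ | σ.Nonempty ∧ ∃ v, ∀ x ∈ σ, spd (wedgeWeight x₀ y₀ ω₁ ω₂) v x ≤ δ})
    (hDC : dowkerOfCompletions =
      {σ | σ.Nonempty ∧ ∃ v, ∀ x ∈ σ, wedgeWeight x₀ y₀ (spd ω₁) (spd ω₂) v x ≤ δ})
    (hA : A = {τ | τ.Nonempty ∧
      ∃ σ, σ ∈ dowkerWedge ∧ σ ∉ dowkerOfCompletions ∧ τ ⊆ σ}) :
    ∀ σ ∈ A, (∀ τ ∈ A, σ ⊆ τ → τ = σ) → Sum.inl x₀ ∈ σ :=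
  wedge_difference_maximal_simplices_contain_wedge_point_general ω₁ ω₂ x₀ y₀ δ dowkerWedge
    dowkerOfCompletions A hDW hDC hA
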